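/- The function x ↦ −(9/2)·H_{1,1}(x) + 10·H_{2,1}(x) − 8·H_{3,1}(x), defined for x > 0, tends to −π as x → 1. -/

import Mathlib

open MeasureTheory Real Filter Set Topology

/-- `H₁₁(x) = ∫₀^∞ (u+1)⁻¹ (ux+1)⁻¹ u^(1/2) du`. -/
noncomputable def H11 (x : ℝ) : ℝ :=
  ∫ u in Set.Ioi (0 : ℝ), (u + 1)⁻¹ * (u * x + 1)⁻¹ * u ^ ((1 : ℝ) / 2)

/-- `H₂₁(x) = ∫₀^∞ (u+1)⁻² (ux+1)⁻¹ u^(3/2) du`. -/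
noncomputable def H21 (x : ℝ) : ℝ :=
  ∫ u in Set.Ioi (0 : ℝ), (u + 1) ^ (-2 : ℤ) * (u * x + 1)⁻¹ * u ^ ((3 : ℝ) / 2)

/-- `H₃₁(x) = ∫₀^∞ (u+1)⁻³ (ux+1)⁻¹ u^(5/2) du`. -/
noncomputable def H31 (x : ℝ) : ℝ :=
  ∫ u in Set.Ioi (0 : ℝ), (u + 1) ^ (-3 : ℤ) * (u * x + 1)⁻¹ * u ^ ((5 : ℝ) / 2)

namespace LimitHAux

lemma sqrt_tendsto_atTop : Tendsto Real.sqrt atTop atTop :=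
  (tendsto_rpow_atTop (by norm_num : (0:ℝ) < 1/2)).congr
    (fun x => (Real.sqrt_eq_rpow x).symm)

/-- The combined integrand coefficient. -/
noncomputable def K (u : ℝ) : ℝ :=
  -(9/2) * ((u + 1)⁻¹ * u ^ ((1:ℝ)/2)) + 10 * ((u + 1) ^ (-2 : ℤ) * u ^ ((3:ℝ)/2))
    - 8 * ((u + 1) ^ (-3 : ℤ) * u ^ ((5:ℝ)/2))

lemma rpow_half {u : ℝ} : u ^ ((1:ℝ)/2) = Real.sqrt u := (Real.sqrt_eq_rpow u).symm

lemma rpow_threehalf {u : ℝ} (hu : 0 < u) : u ^ ((3:ℝ)/2) = u * Real.sqrt u := by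
  rw [show (3:ℝ)/2 = 1 + 1/2 by norm_num, Real.rpow_add hu, Real.rpow_one, ← Real.sqrt_eq_rpow]

lemma rpow_fivehalf {u : ℝ} (hu : 0 < u) : u ^ ((5:ℝ)/2) = u^2 * Real.sqrt u := by
  rw [show (5:ℝ)/2 = 2 + 1/2 by norm_num, Real.rpow_add hu, ← Real.sqrt_eq_rpow, Real.rpow_two]

lemma K_sqrt {u : ℝ} (hu : 0 < u) :
    K u = -(9/2) * ((u + 1)⁻¹ * Real.sqrt u) + 10 * (((u + 1)^2)⁻¹ * (u * Real.sqrt u))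
      - 8 * (((u + 1)^3)⁻¹ * (u^2 * Real.sqrt u)) := by
  rw [K, rpow_half, rpow_threehalf hu, rpow_fivehalf hu, zpow_neg, zpow_neg]
  norm_num [zpow_ofNat]

lemma K_eq {u : ℝ} (hu : 0 < u) :
    K u = -((((9:ℝ)/2)*(u+1)^2 - 10*u*(u+1) + 8*u^2) * Real.sqrt u) / (u+1)^3 := by
  rw [K_sqrt hu]
  have hA : (u:ℝ) + 1 ≠ 0 := by positivity
  field_simp
  ring

lemma N_nonneg (u : ℝ) : 0 ≤ ((9:ℝ)/2)*(u+1)^2 - 10*u*(u+1) + 8*u^2 := by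
  nlinarith [sq_nonneg (u-1), sq_nonneg u]

lemma K_nonpos {u : ℝ} (hu : 0 < u) : K u ≤ 0 := by
  rw [K_eq hu]
  apply div_nonpos_of_nonpos_of_nonneg
  · simpa using mul_nonneg (N_nonneg u) (Real.sqrt_nonneg u)
  · positivity

lemma K_bound {u : ℝ} (hu : 0 < u) : -K u ≤ 45/2 * (Real.sqrt u)⁻¹ := by
  rw [K_eq hu, neg_div, neg_neg]
  have hA : (0:ℝ) < (u + 1)^3 := by positivity
  have hs : (0:ℝ) < Real.sqrt u := Real.sqrt_pos.2 hu
  have hsq : Real.sqrt u ^ 2 = u := Real.sq_sqrt hu.le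
  rw [show (45:ℝ)/2 * (Real.sqrt u)⁻¹ = (45/2) / Real.sqrt u from (div_eq_mul_inv _ _).symm,
    div_le_div_iff₀ hA hs]
  nlinarith [hsq, sq_nonneg u, mul_pos hu hu, mul_pos (mul_pos hu hu) hu, hu.le]

/-- The dominating function. -/
noncomputable def Mfun (u : ℝ) : ℝ := (Real.sqrt u)⁻¹ * (u/2 + 1)⁻¹

noncomputable def Psi (u : ℝ) : ℝ := 2 * Real.sqrt 2 * Real.arctan (Real.sqrt u / Real.sqrt 2)

lemma Psi_deriv {u : ℝ} (hu : 0 < u) : HasDerivAt Psi (Mfun u) u := by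
  have h2 : (0:ℝ) < Real.sqrt 2 := Real.sqrt_pos.2 two_pos
  have hs : 0 < Real.sqrt u := Real.sqrt_pos.2 hu
  have hinner : HasDerivAt (fun v => Real.sqrt v / Real.sqrt 2)
      (1 / (2 * Real.sqrt u) / Real.sqrt 2) u :=
    (Real.hasDerivAt_sqrt hu.ne').div_const _
  have harc := (Real.hasDerivAt_arctan (Real.sqrt u / Real.sqrt 2)).comp u hinner
  have := harc.const_mul (2 * Real.sqrt 2)
  refine this.congr_deriv (Eq.symm ?_)
  have hsq : Real.sqrt u ^ 2 = u := Real.sq_sqrt hu.le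
  have h2sq : Real.sqrt 2 ^ 2 = 2 := Real.sq_sqrt (by norm_num)
  rw [Mfun, div_pow, hsq, h2sq]
  field_simp
  ring

lemma Psi_tendsto : Tendsto Psi atTop (𝓝 (2 * Real.sqrt 2 * (π/2))) := by
  have h2 : (0:ℝ) < Real.sqrt 2 := Real.sqrt_pos.2 two_pos
  have h1 : Tendsto (fun u => Real.sqrt u / Real.sqrt 2) atTop atTop :=
    sqrt_tendsto_atTop.atTop_div_const h2
  exact ((Real.tendsto_arctan_atTop.mono_right nhdsWithin_le_nhds).comp h1).const_mul _

lemma Mfun_integrable : IntegrableOn Mfun (Ioi 0) := by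
  refine integrableOn_Ioi_deriv_of_nonneg ?_ (fun u hu => Psi_deriv hu) ?_ Psi_tendsto
  · exact Continuous.continuousWithinAt
      (continuous_const.mul (Real.continuous_arctan.comp (Real.continuous_sqrt.div_const _)))
  · intro u hu
    simp only [Set.mem_Ioi] at hu
    have hs : 0 < Real.sqrt u := Real.sqrt_pos.2 hu
    have h1 : (0:ℝ) < u/2 + 1 := by linarith
    rw [Mfun]
    positivity

/-- The antiderivative of `-(K u * (u + 1)⁻¹)`. -/
noncomputable def Fa (u : ℝ) : ℝ :=
  2 * Real.arctan (Real.sqrt u) - Real.sqrt u * (2 + 7/3*u + 3*u^2) * ((1+u)^3)⁻¹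

lemma Fa_deriv {u : ℝ} (hu : 0 < u) : HasDerivAt Fa (-(K u * (u*1+1)⁻¹)) u := by
  have hs : 0 < Real.sqrt u := Real.sqrt_pos.2 hu
  have hA : (0:ℝ) < 1 + u := by linarith
  have hsq : Real.sqrt u ^ 2 = u := Real.sq_sqrt hu.le
  have hsqrt : HasDerivAt Real.sqrt (1 / (2 * Real.sqrt u)) u := Real.hasDerivAt_sqrt hu.ne'
  have harc := (Real.hasDerivAt_arctan (Real.sqrt u)).comp u hsqrt
  have hpoly : HasDerivAt (fun v : ℝ => 2 + 7/3*v + 3*v^2) (7/3 + 3*(2*u)) u := by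
    have := (((hasDerivAt_id u).const_mul ((7:ℝ)/3)).const_add 2).add
      ((hasDerivAt_pow 2 u).const_mul (3:ℝ))
    exact this.congr_deriv (by norm_num)
  have hcube : HasDerivAt (fun v : ℝ => ((1+v)^3)⁻¹)
      (-(((3:ℕ):ℝ) * (1+u)^2 * 1) / ((1+u)^3)^2) u :=
    (((hasDerivAt_id u).const_add 1).pow 3).inv (pow_ne_zero _ hA.ne')
  have hprod := (hsqrt.mul hpoly).mul hcube
  have htot := (harc.const_mul 2).sub hprod
  refine htot.congr_deriv (Eq.symm ?_)
  rw [K_sqrt hu]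
  show _ = 2 * ((1 / (1 + Real.sqrt u ^ 2)) * (1 / (2 * Real.sqrt u))) - _
  simp only [Pi.mul_apply]
  set s := Real.sqrt u with hsdef
  rw [← hsq]
  have hs1 : (1:ℝ) + s^2 ≠ 0 := by positivity
  have hs2 : s^2 + 1 ≠ 0 := by positivity
  field_simp
  ring

lemma Fa_tendsto : Tendsto Fa atTop (𝓝 π) := by
  have h1 : Tendsto (fun u => 2 * Real.arctan (Real.sqrt u)) atTop (𝓝 (2 * (π/2))) :=
    ((Real.tendsto_arctan_atTop.mono_right nhdsWithin_le_nhds).comp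
      sqrt_tendsto_atTop).const_mul 2
  have h2 : Tendsto (fun u => Real.sqrt u * (2 + 7/3*u + 3*u^2) * ((1+u)^3)⁻¹) atTop (𝓝 0) := by
    have hup : Tendsto (fun u => 8 * (Real.sqrt u)⁻¹) atTop (𝓝 (8 * 0)) :=
      (sqrt_tendsto_atTop.inv_tendsto_atTop).const_mul 8
    rw [mul_zero] at hup
    refine tendsto_of_tendsto_of_tendsto_of_le_of_le' tendsto_const_nhds hup ?_ ?_
    · filter_upwards [eventually_gt_atTop (0:ℝ)] with u hu
      have hs : 0 < Real.sqrt u := Real.sqrt_pos.2 hu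
      have hA : (0:ℝ) < 1 + u := by linarith
      positivity
    · filter_upwards [eventually_gt_atTop (0:ℝ)] with u hu
      have hs : 0 < Real.sqrt u := Real.sqrt_pos.2 hu
      have hA : (0:ℝ) < (1 + u)^3 := by positivity
      have hsq : Real.sqrt u ^ 2 = u := Real.sq_sqrt hu.le
      rw [show Real.sqrt u * (2 + 7/3*u + 3*u^2) * ((1+u)^3)⁻¹
          = Real.sqrt u * (2 + 7/3*u + 3*u^2) / (1+u)^3 from (div_eq_mul_inv _ _).symm,
        show (8:ℝ) * (Real.sqrt u)⁻¹ = 8 / Real.sqrt u from (div_eq_mul_inv _ _).symm,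
        div_le_div_iff₀ hA hs]
      nlinarith [hsq, hu.le, mul_pos hu hu, mul_pos (mul_pos hu hu) hu, hs.le,
        mul_nonneg (mul_nonneg hs.le hu.le) hu.le]
  have := h1.sub h2
  rw [sub_zero] at this
  rw [show (2:ℝ) * (π/2) = π by ring] at this
  exact this

lemma Fa_cont0 : ContinuousWithinAt Fa (Ici 0) 0 := by
  apply ContinuousAt.continuousWithinAt
  apply ContinuousAt.sub
  · exact (continuous_const.mul (Real.continuous_arctan.comp Real.continuous_sqrt)).continuousAt
  · exact ((Real.continuous_sqrt.mul (by continuity)).continuousAt).mul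
      (((by continuity : Continuous fun u : ℝ => (1+u)^3).continuousAt).inv₀ (by norm_num))

lemma K_contOn : ContinuousOn K (Ioi 0) := by
  intro u hu
  simp only [Set.mem_Ioi] at hu
  have h0 : u ≠ 0 := hu.ne'
  have h1 : u + 1 ≠ 0 := by positivity
  apply ContinuousAt.continuousWithinAt
  unfold K
  fun_prop (disch := first | assumption | exact Or.inl h1 | exact Or.inl h0 | norm_num)

lemma integral_K_eq : ∫ u in Ioi (0:ℝ), K u * (u*1+1)⁻¹ = -π := by
  have hpos : ∀ u ∈ Ioi (0:ℝ), 0 ≤ -(K u * (u*1+1)⁻¹) := by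
    intro u hu
    simp only [Set.mem_Ioi] at hu
    have h1 : (0:ℝ) ≤ (u*1+1)⁻¹ := by positivity
    simpa [neg_mul] using mul_nonneg (neg_nonneg.2 (K_nonpos hu)) h1
  have h := integral_Ioi_of_hasDerivAt_of_nonneg Fa_cont0 (fun u hu => Fa_deriv hu) hpos
    Fa_tendsto
  have hFa0 : Fa 0 = 0 := by simp [Fa]
  rw [hFa0, sub_zero, integral_neg] at h
  linarith

end LimitHAux

open LimitHAux in
/-- The function `x ↦ −(9/2)H₁₁(x) + 10H₂₁(x) − 8H₃₁(x)`, defined for `x > 0`,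
tends to `−π` as `x → 1`. -/
theorem limit_H_combination_neg_pi :
    Filter.Tendsto (fun x : ℝ => -(9 / 2) * H11 x + 10 * H21 x - 8 * H31 x)
      (nhdsWithin 1 (Set.Ioi 0)) (nhds (-Real.pi)) := by
  have hinvcont : ∀ x : ℝ, 1/2 < x → ContinuousOn (fun u : ℝ => (u * x + 1)⁻¹) (Ioi 0) := by
    intro x hx u hu
    simp only [Set.mem_Ioi] at hu
    have h2 : u * x + 1 ≠ 0 := by nlinarith
    exact ContinuousAt.continuousWithinAt (by fun_prop (disch := assumption))
  -- pointwise bounds for x > 1/2, u > 0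
  have hb : ∀ x : ℝ, 1/2 < x → ∀ u ∈ Ioi (0:ℝ), ‖K u * (u * x + 1)⁻¹‖ ≤ 45/2 * Mfun u := by
    intro x hx u hu
    simp only [Set.mem_Ioi] at hu
    have hs : 0 < Real.sqrt u := Real.sqrt_pos.2 hu
    have hux : (0:ℝ) < u * x + 1 := by nlinarith
    have hu2 : (0:ℝ) < u/2 + 1 := by linarith
    have hinv : (u * x + 1)⁻¹ ≤ (u/2 + 1)⁻¹ := by
      apply inv_anti₀ hu2
      nlinarith
    have habs : ‖K u * (u * x + 1)⁻¹‖ = (-K u) * (u * x + 1)⁻¹ := by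
      rw [norm_mul, Real.norm_eq_abs, Real.norm_eq_abs, abs_of_nonpos (K_nonpos hu),
        abs_of_pos (inv_pos.2 hux)]
    rw [habs, Mfun, show (45:ℝ)/2 * ((Real.sqrt u)⁻¹ * (u/2 + 1)⁻¹)
      = (45/2 * (Real.sqrt u)⁻¹) * (u/2 + 1)⁻¹ by ring]
    exact mul_le_mul (K_bound hu) hinv (by positivity) (by positivity)
  -- dominated convergence
  have hDCT : Filter.Tendsto (fun x : ℝ => ∫ u in Ioi (0:ℝ), K u * (u * x + 1)⁻¹)
      (nhdsWithin 1 (Set.Ioi 0)) (𝓝 (∫ u in Ioi (0:ℝ), K u * (u * 1 + 1)⁻¹)) := by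
    have ev : ∀ᶠ x in nhdsWithin (1:ℝ) (Set.Ioi 0), 1/2 < x :=
      Eventually.filter_mono nhdsWithin_le_nhds (eventually_gt_nhds (by norm_num))
    refine tendsto_integral_filter_of_dominated_convergence (fun u => 45/2 * Mfun u)
      ?_ ?_ (Mfun_integrable.const_mul _) ?_
    · filter_upwards [ev] with x hx
      exact (K_contOn.mul (hinvcont x hx)).aestronglyMeasurable measurableSet_Ioi
    · filter_upwards [ev] with x hx
      exact (ae_restrict_iff' measurableSet_Ioi).2 (ae_of_all _ fun u hu => hb x hx u hu)
    · refine (ae_restrict_iff' measurableSet_Ioi).2 (ae_of_all _ fun u hu => ?_)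
      simp only [Set.mem_Ioi] at hu
      have hne : (u * 1 + 1) ≠ 0 := by positivity
      have hcont : ContinuousAt (fun x : ℝ => K u * (u * x + 1)⁻¹) 1 :=
        continuousAt_const.mul
          (((continuous_const.mul continuous_id).add continuous_const).continuousAt.inv₀ hne)
      exact hcont.continuousWithinAt.tendsto
  rw [integral_K_eq] at hDCT
  -- eventual equality with the H-combination
  refine hDCT.congr' ?_
  have ev : ∀ᶠ x in nhdsWithin (1:ℝ) (Set.Ioi 0), 1/2 < x :=
    Eventually.filter_mono nhdsWithin_le_nhds (eventually_gt_nhds (by norm_num))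
  filter_upwards [ev] with x hx
  -- integrability of the three pieces
  have hbnd : ∀ p : ℝ → ℝ, (∀ u ∈ Ioi (0:ℝ), ‖p u‖ ≤ Mfun u) →
      AEStronglyMeasurable p (volume.restrict (Ioi 0)) → IntegrableOn p (Ioi 0) := by
    intro p hp hm
    exact Mfun_integrable.mono' hm
      ((ae_restrict_iff' measurableSet_Ioi).2 (ae_of_all _ hp))
  have hux : ∀ u : ℝ, 0 < u → (0:ℝ) < u * x + 1 := fun u hu => by nlinarith
  have hinvle : ∀ u : ℝ, 0 < u → (u * x + 1)⁻¹ ≤ (u/2 + 1)⁻¹ := by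
    intro u hu
    apply inv_anti₀ (by linarith)
    nlinarith
  have hi1 : IntegrableOn (fun u : ℝ => (u + 1)⁻¹ * (u * x + 1)⁻¹ * u ^ ((1:ℝ)/2)) (Ioi 0) := by
    refine hbnd _ (fun u hu => ?_) ?_
    swap
    · refine ContinuousOn.aestronglyMeasurable (fun u hu => ?_) measurableSet_Ioi
      simp only [Set.mem_Ioi] at hu
      have h1 : u + 1 ≠ 0 := by positivity
      have h2 : u * x + 1 ≠ 0 := by nlinarith
      have h0 : u ≠ 0 := hu.ne'
      exact ContinuousAt.continuousWithinAt
        (by fun_prop (disch := first | assumption | exact Or.inl h1 | exact Or.inl h0 | norm_num))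
    simp only [Set.mem_Ioi] at hu
    have hs : 0 < Real.sqrt u := Real.sqrt_pos.2 hu
    have hsq : Real.sqrt u ^ 2 = u := Real.sq_sqrt hu.le
    have h1 : (0:ℝ) < u + 1 := by linarith
    rw [Real.norm_eq_abs, abs_of_nonneg (by positivity), rpow_half, Mfun]
    have e1 : (u + 1)⁻¹ * Real.sqrt u ≤ (Real.sqrt u)⁻¹ := by
      rw [show (u + 1)⁻¹ * Real.sqrt u = Real.sqrt u / (u + 1) by ring,
        show (Real.sqrt u)⁻¹ = 1 / Real.sqrt u by ring, div_le_div_iff₀ h1 hs]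
      nlinarith [hsq]
    calc (u + 1)⁻¹ * (u * x + 1)⁻¹ * Real.sqrt u
        = ((u + 1)⁻¹ * Real.sqrt u) * (u * x + 1)⁻¹ := by ring
      _ ≤ (Real.sqrt u)⁻¹ * (u/2 + 1)⁻¹ :=
          mul_le_mul e1 (hinvle u hu) (by positivity) (by positivity)
  have hi2 : IntegrableOn (fun u : ℝ => (u + 1) ^ (-2:ℤ) * (u * x + 1)⁻¹ * u ^ ((3:ℝ)/2))
      (Ioi 0) := by
    refine hbnd _ ?_ ?_
    · intro u hu
      simp only [Set.mem_Ioi] at hu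
      have hs : 0 < Real.sqrt u := Real.sqrt_pos.2 hu
      have hsq : Real.sqrt u ^ 2 = u := Real.sq_sqrt hu.le
      have h1 : (0:ℝ) < u + 1 := by linarith
      have hz : (u + 1) ^ (-2:ℤ) = ((u + 1)^2)⁻¹ := by
        rw [zpow_neg]; norm_num [zpow_ofNat]
      rw [Real.norm_eq_abs, hz, rpow_threehalf hu, abs_of_nonneg (by positivity), Mfun]
      have e1 : ((u + 1)^2)⁻¹ * (u * Real.sqrt u) ≤ (Real.sqrt u)⁻¹ := by
        rw [show ((u + 1)^2)⁻¹ * (u * Real.sqrt u) = u * Real.sqrt u / (u + 1)^2 by ring,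
          show (Real.sqrt u)⁻¹ = 1 / Real.sqrt u by ring,
          div_le_div_iff₀ (by positivity) hs]
        nlinarith [hsq, hu.le]
      calc ((u + 1)^2)⁻¹ * (u * x + 1)⁻¹ * (u * Real.sqrt u)
          = (((u + 1)^2)⁻¹ * (u * Real.sqrt u)) * (u * x + 1)⁻¹ := by ring
        _ ≤ (Real.sqrt u)⁻¹ * (u/2 + 1)⁻¹ :=
            mul_le_mul e1 (hinvle u hu) (by positivity) (by positivity)
    · refine ContinuousOn.aestronglyMeasurable (fun u hu => ?_) measurableSet_Ioi
      simp only [Set.mem_Ioi] at hu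
      have h1 : u + 1 ≠ 0 := by positivity
      have h2 : u * x + 1 ≠ 0 := by nlinarith
      have h0 : u ≠ 0 := hu.ne'
      exact ContinuousAt.continuousWithinAt
        (by fun_prop (disch := first | assumption | exact Or.inl h1 | exact Or.inl h0 | norm_num))
  have hi3 : IntegrableOn (fun u : ℝ => (u + 1) ^ (-3:ℤ) * (u * x + 1)⁻¹ * u ^ ((5:ℝ)/2))
      (Ioi 0) := by
    refine hbnd _ ?_ ?_
    · intro u hu
      simp only [Set.mem_Ioi] at hu
      have hs : 0 < Real.sqrt u := Real.sqrt_pos.2 hu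
      have hsq : Real.sqrt u ^ 2 = u := Real.sq_sqrt hu.le
      have h1 : (0:ℝ) < u + 1 := by linarith
      have hz : (u + 1) ^ (-3:ℤ) = ((u + 1)^3)⁻¹ := by
        rw [zpow_neg]; norm_num [zpow_ofNat]
      rw [Real.norm_eq_abs, hz, rpow_fivehalf hu, abs_of_nonneg (by positivity), Mfun]
      have e1 : ((u + 1)^3)⁻¹ * (u^2 * Real.sqrt u) ≤ (Real.sqrt u)⁻¹ := by
        rw [show ((u + 1)^3)⁻¹ * (u^2 * Real.sqrt u) = u^2 * Real.sqrt u / (u + 1)^3 by ring,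
          show (Real.sqrt u)⁻¹ = 1 / Real.sqrt u by ring,
          div_le_div_iff₀ (by positivity) hs]
        nlinarith [hsq, hu.le, sq_nonneg u, mul_pos hu hu]
      calc ((u + 1)^3)⁻¹ * (u * x + 1)⁻¹ * (u^2 * Real.sqrt u)
          = (((u + 1)^3)⁻¹ * (u^2 * Real.sqrt u)) * (u * x + 1)⁻¹ := by ring
        _ ≤ (Real.sqrt u)⁻¹ * (u/2 + 1)⁻¹ :=
            mul_le_mul e1 (hinvle u hu) (by positivity) (by positivity)
    · refine ContinuousOn.aestronglyMeasurable (fun u hu => ?_) measurableSet_Ioi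
      simp only [Set.mem_Ioi] at hu
      have h1 : u + 1 ≠ 0 := by positivity
      have h2 : u * x + 1 ≠ 0 := by nlinarith
      have h0 : u ≠ 0 := hu.ne'
      exact ContinuousAt.continuousWithinAt
        (by fun_prop (disch := first | assumption | exact Or.inl h1 | exact Or.inl h0 | norm_num))
  -- split the integral
  have hKsplit : ∀ u : ℝ, K u * (u * x + 1)⁻¹
      = (-(9/2)) * ((u + 1)⁻¹ * (u * x + 1)⁻¹ * u ^ ((1:ℝ)/2))
        + (10 * ((u + 1) ^ (-2:ℤ) * (u * x + 1)⁻¹ * u ^ ((3:ℝ)/2))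
          - 8 * ((u + 1) ^ (-3:ℤ) * (u * x + 1)⁻¹ * u ^ ((5:ℝ)/2))) := by
    intro u; rw [K]; ring
  calc (∫ u in Ioi (0:ℝ), K u * (u * x + 1)⁻¹)
      = ∫ u in Ioi (0:ℝ), ((-(9/2)) * ((u + 1)⁻¹ * (u * x + 1)⁻¹ * u ^ ((1:ℝ)/2))
          + (10 * ((u + 1) ^ (-2:ℤ) * (u * x + 1)⁻¹ * u ^ ((3:ℝ)/2))
            - 8 * ((u + 1) ^ (-3:ℤ) * (u * x + 1)⁻¹ * u ^ ((5:ℝ)/2)))) := by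
        simp only [hKsplit]
    _ = -(9 / 2) * H11 x + 10 * H21 x - 8 * H31 x := by
        have ha1 : Integrable
            (fun u : ℝ => (-(9/2:ℝ)) * ((u + 1)⁻¹ * (u * x + 1)⁻¹ * u ^ ((1:ℝ)/2)))
            (volume.restrict (Ioi 0)) := hi1.const_mul _
        have hb2 : Integrable
            (fun u : ℝ => (10:ℝ) * ((u + 1) ^ (-2:ℤ) * (u * x + 1)⁻¹ * u ^ ((3:ℝ)/2)))
            (volume.restrict (Ioi 0)) := hi2.const_mul _
        have hb3 : Integrable
            (fun u : ℝ => (8:ℝ) * ((u + 1) ^ (-3:ℤ) * (u * x + 1)⁻¹ * u ^ ((5:ℝ)/2)))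
            (volume.restrict (Ioi 0)) := hi3.const_mul _
        have ha2 : Integrable
            (fun u : ℝ => (10:ℝ) * ((u + 1) ^ (-2:ℤ) * (u * x + 1)⁻¹ * u ^ ((3:ℝ)/2))
              - (8:ℝ) * ((u + 1) ^ (-3:ℤ) * (u * x + 1)⁻¹ * u ^ ((5:ℝ)/2)))
            (volume.restrict (Ioi 0)) := hb2.sub hb3
        rw [integral_add ha1 ha2, integral_sub hb2 hb3,
          integral_const_mul, integral_const_mul, integral_const_mul]
        rw [H11, H21, H31]
        ring
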